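/- Let G be a DAG with topological ordering ord, and let u, v be vertices with ord(v) < ord(u) and no directed path from v to u in G. Then the number of ordered pairs of edges ((w,x),(y,z)) of G with x ⇝ u, v ⇝ y, and ord(y) < ord(x) is at most the number of ordered pairs of edges ((a,b),(c,d)) such that b ⇝ c holds in G+(u,v) but b ⇝ c does not hold in G. -/

import Mathlib

/-- Reachability: a directed path (possibly of length 0) from `x` to `y`. -/
def Reach {V : Type*} (E : V → V → Prop) : V → V → Prop :=
  Relation.ReflTransGen E

/-- A digraph is acyclic if it has no directed cycle. -/
def Acyclic {V : Type*} (E : V → V → Prop) : Prop :=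
  ∀ x, ¬ Relation.TransGen E x x

/-- `ord` is a topological ordering of the digraph `E`. -/
def IsTopOrd {V : Type*} {n : ℕ} (E : V → V → Prop) (ord : V ≃ Fin n) : Prop :=
  ∀ a b, E a b → ord a < ord b

/-- The graph `G + (u,v)`: the edge `(u,v)` is added to `E`. -/
def AddEdge {V : Type*} (E : V → V → Prop) (u v : V) : V → V → Prop :=
  fun a b => E a b ∨ (a = u ∧ b = v)

/-- `A = {x : ord v ≤ ord x ≤ ord u and x ⇝ u}`. -/
def AncS {V : Type*} {n : ℕ} (E : V → V → Prop) (ord : V ≃ Fin n) (u v : V) : Set V :=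
  {x | ord v ≤ ord x ∧ ord x ≤ ord u ∧ Reach E x u}

/-- `D = {x : ord v ≤ ord x ≤ ord u and v ⇝ x}`. -/
def DesS {V : Type*} {n : ℕ} (E : V → V → Prop) (ord : V ≃ Fin n) (u v : V) : Set V :=
  {x | ord v ≤ ord x ∧ ord x ≤ ord u ∧ Reach E v x}

/-- `ord'` is a canonical reordering for `ord, u, v`: conditions (a)-(d). -/
def IsCanonical {V : Type*} {n : ℕ} (E : V → V → Prop) (ord ord' : V ≃ Fin n)
    (u v : V) : Prop :=
  (∀ x, x ∉ AncS E ord u v ∪ DesS E ord u v → ord' x = ord x) ∧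
  (⇑ord' '' (AncS E ord u v ∪ DesS E ord u v) =
    ⇑ord '' (AncS E ord u v ∪ DesS E ord u v)) ∧
  (∀ x y, (x ∈ AncS E ord u v ∧ y ∈ AncS E ord u v) ∨
          (x ∈ DesS E ord u v ∧ y ∈ DesS E ord u v) →
      (ord' x < ord' y ↔ ord x < ord y)) ∧
  (∀ x ∈ AncS E ord u v, ∀ y ∈ DesS E ord u v, ord' x < ord' y)

/-!
Each pair counted on the left is already counted on the right, with the same edges: in
`G + (u,v)` the path `x ⇝ u → v ⇝ y` relates `x` to `y`, while in `G` a path `x ⇝ y` would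
force `ord x ≤ ord y`.
-/

section Reachability

variable {V : Type*} {E : V → V → Prop}

theorem IsTopOrd.le_of_reach {n : ℕ} {ord : V ≃ Fin n} (htop : IsTopOrd E ord) {a b : V}
    (hab : Reach E a b) : ord a ≤ ord b := by
  induction hab with
  | refl => exact le_rfl
  | tail _ hedge ih => exact ih.trans (htop _ _ hedge).le

theorem Reach.addEdge {a b : V} (u v : V) (hab : Reach E a b) : Reach (AddEdge E u v) a b :=
  Relation.ReflTransGen.mono (fun _ _ => Or.inl) _ _ hab

theorem reach_addEdge_of_reach_of_reach {u v x y : V} (hxu : Reach E x u) (hvy : Reach E v y) :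
    Reach (AddEdge E u v) x y :=
  (hxu.addEdge u v).trans <|
    Relation.ReflTransGen.head (Or.inr ⟨rfl, rfl⟩) (hvy.addEdge u v)

end Reachability

theorem count_newly_related_edge_pairs_general {V : Type*} [Fintype V] {n : ℕ}
    (E : V → V → Prop)
    (ord : V ≃ Fin n) (htop : IsTopOrd E ord)
    (u v : V) :
    {q : (V × V) × (V × V) | E q.1.1 q.1.2 ∧ E q.2.1 q.2.2 ∧
        Reach E q.1.2 u ∧ Reach E v q.2.1 ∧ ord q.2.1 < ord q.1.2}.ncard ≤
    {q : (V × V) × (V × V) | AddEdge E u v q.1.1 q.1.2 ∧ AddEdge E u v q.2.1 q.2.2 ∧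
        Reach (AddEdge E u v) q.1.2 q.2.1 ∧ ¬ Reach E q.1.2 q.2.1}.ncard := by
  refine Set.ncard_le_ncard ?_ (Set.toFinite _)
  rintro ⟨⟨w, x⟩, ⟨y, z⟩⟩ ⟨hwx, hyz, hxu, hvy, hyx⟩
  exact ⟨Or.inl hwx, Or.inl hyz, reach_addEdge_of_reach_of_reach hxu hvy,
    fun hxy => (htop.le_of_reach hxy).not_gt hyx⟩

/-- the number of pairs of edges (into an ancestor of `u`, out of a
descendant of `v`) with `ord y < ord x` is at most the number of pairs of edges
of `G + (u,v)` that become related for the first time upon inserting `(u,v)`. -/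
theorem count_newly_related_edge_pairs {V : Type*} [Fintype V] {n : ℕ}
    (E : V → V → Prop) (hacyc : Acyclic E)
    (ord : V ≃ Fin n) (htop : IsTopOrd E ord)
    (u v : V) (huv : ord v < ord u) (hnr : ¬ Reach E v u) :
    {q : (V × V) × (V × V) | E q.1.1 q.1.2 ∧ E q.2.1 q.2.2 ∧
        Reach E q.1.2 u ∧ Reach E v q.2.1 ∧ ord q.2.1 < ord q.1.2}.ncard ≤
    {q : (V × V) × (V × V) | AddEdge E u v q.1.1 q.1.2 ∧ AddEdge E u v q.2.1 q.2.2 ∧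
        Reach (AddEdge E u v) q.1.2 q.2.1 ∧ ¬ Reach E q.1.2 q.2.1}.ncard :=
  count_newly_related_edge_pairs_general E ord htop u v
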